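/- Let f : ℝ^m → ℝ be smooth and ℤ^m-periodic. Then ∫_{[0,1]^m} D²f(x)[∇f(x), ∇f(x)]·e^{−f(x)} dx = (1/2)·∫_{[0,1]^m} ( |∇f(x)|⁴ − |∇f(x)|²·Δf(x) )·e^{−f(x)} dx. -/

import Mathlib

open MeasureTheory
open scoped RealInnerProductSpace

noncomputable section

abbrev E (m : ℕ) := EuclideanSpace ℝ (Fin m)

/-- The standard orthonormal basis of `ℝ^m`. -/
def eE (m : ℕ) (a : Fin m) : E m := EuclideanSpace.single a 1

/-- Second Fréchet derivative as a bilinear form. -/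
def D2E (m : ℕ) (g : E m → ℝ) (x X Y : E m) : ℝ := iteratedFDeriv ℝ 2 g x ![X, Y]

/-- The Laplacian `Δg(x) = Σ_a D²g(x)[e_a, e_a]`. -/
def lapE (m : ℕ) (g : E m → ℝ) (x : E m) : ℝ := ∑ a, D2E m g x (eE m a) (eE m a)

/-- The unit cube `[0,1]^m`. -/
def cube (m : ℕ) : Set (E m) := {x | ∀ i, x i ∈ Set.Icc (0 : ℝ) 1}

/-- The vector of `ℤ^m ⊂ ℝ^m` with integer coordinates `k`. -/
def latt (m : ℕ) (k : Fin m → ℤ) : E m := WithLp.toLp 2 (fun i => (k i : ℝ))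

/-! The vector field `W = e^{-f} |∇f|² ∇f` is `ℤ^m`-periodic, so the divergence theorem on
`[0,1]^m` gives `∫ div W = 0`: the fluxes through opposite faces cancel. By the product rule,
`div W = e^{-f} (2 D²f[∇f, ∇f] + |∇f|² Δf - |∇f|⁴)`, which rearranges into the identity. -/

section Calculus

variable {m : ℕ}

lemma fderiv_add_of_periodic {V F : Type*} [NormedAddCommGroup V] [NormedSpace ℝ V]
    [NormedAddCommGroup F] [NormedSpace ℝ F] {g : V → F} {a : V} (hg : ∀ x, g (x + a) = g x)
    (x : V) : fderiv ℝ g (x + a) = fderiv ℝ g x := by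
  rw [← fderiv_comp_add_right, funext hg]

lemma gradient_add_of_periodic {g : E m → ℝ} {a : E m} (hg : ∀ x, g (x + a) = g x) (x : E m) :
    gradient g (x + a) = gradient g x := by
  simp only [gradient, fderiv_add_of_periodic hg]

lemma fderiv_gradient (g : E m → ℝ) (x : E m) :
    fderiv ℝ (gradient g) x =
      ((InnerProductSpace.toDual ℝ (E m)).symm.toContinuousLinearEquiv :
        (E m →L[ℝ] ℝ) ≃L[ℝ] E m).toContinuousLinearMap.comp (fderiv ℝ (fderiv ℝ g) x) :=
  (InnerProductSpace.toDual ℝ (E m)).symm.toContinuousLinearEquiv.comp_fderiv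

lemma D2E_eq_inner_fderiv_gradient (g : E m → ℝ) (x X Y : E m) :
    D2E m g x X Y = ⟪fderiv ℝ (gradient g) x X, Y⟫ := by
  simp [D2E, iteratedFDeriv_two_apply, fderiv_gradient, InnerProductSpace.toDual_symm_apply]

lemma contDiff_gradient {n : WithTop ℕ∞} {g : E m → ℝ} (hg : ContDiff ℝ (n + 1) g) :
    ContDiff ℝ n (gradient g) :=
  (InnerProductSpace.toDual ℝ (E m)).symm.toContinuousLinearEquiv.contDiff.comp
    (hg.fderiv_right le_rfl)

def divE (m : ℕ) (W : E m → E m) (x : E m) : ℝ := ∑ a, fderiv ℝ W x (eE m a) a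

lemma continuous_divE {W : E m → E m} (hW : ContDiff ℝ 1 W) : Continuous (divE m W) := by
  have := hW.continuous_fderiv one_ne_zero
  unfold divE
  fun_prop

lemma divE_gradient (g : E m → ℝ) (x : E m) : divE m (gradient g) x = lapE m g x := by
  simp [divE, lapE, D2E_eq_inner_fderiv_gradient, eE, EuclideanSpace.inner_single_right]

lemma sum_smul_apply_eE {F : Type*} [NormedAddCommGroup F] [NormedSpace ℝ F] (L : E m →L[ℝ] F)
    (v : E m) :
    ∑ a, v a • L (eE m a) = L v := by
  conv_rhs => rw [← (EuclideanSpace.basisFun (Fin m) ℝ).sum_repr v]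
  simp [eE, map_sum]

lemma divE_smul {φ : E m → ℝ} {V : E m → E m} {x : E m} (hφ : DifferentiableAt ℝ φ x)
    (hV : DifferentiableAt ℝ V x) :
    divE m (fun y => φ y • V y) x = φ x * divE m V x + fderiv ℝ φ x (V x) := by
  rw [divE, fderiv_fun_smul hφ hV, divE,
    ← sum_smul_apply_eE (fderiv ℝ φ x), Finset.mul_sum, ← Finset.sum_add_distrib]
  refine Finset.sum_congr rfl fun a _ => ?_
  simp [mul_comm]

end Calculus

section Weight

variable {m : ℕ} {f : E m → ℝ} {x : E m}

lemma hasFDerivAt_exp_neg_mul_norm_sq_gradient (hf : DifferentiableAt ℝ f x)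
    (hgrad : DifferentiableAt ℝ (gradient f) x) :
    HasFDerivAt (fun y => Real.exp (-f y) * ‖gradient f y‖ ^ 2)
      (Real.exp (-f x) • (2 • (innerSL ℝ (gradient f x)).comp (fderiv ℝ (gradient f) x))
        + ‖gradient f x‖ ^ 2 • (Real.exp (-f x) • -fderiv ℝ f x)) x :=
  hf.hasFDerivAt.neg.exp.mul hgrad.hasFDerivAt.norm_sq

lemma divE_exp_neg_mul_norm_sq_smul_gradient (hf : DifferentiableAt ℝ f x)
    (hgrad : DifferentiableAt ℝ (gradient f) x) :
    divE m (fun y => (Real.exp (-f y) * ‖gradient f y‖ ^ 2) • gradient f y) x =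
      Real.exp (-f x) * (2 * D2E m f x (gradient f x) (gradient f x)
        + ‖gradient f x‖ ^ 2 * lapE m f x - ‖gradient f x‖ ^ 4) := by
  have hφ := hasFDerivAt_exp_neg_mul_norm_sq_gradient hf hgrad
  rw [divE_smul hφ.differentiableAt hgrad, divE_gradient, hφ.fderiv]
  simp only [add_apply, smul_apply, ContinuousLinearMap.comp_apply, neg_apply, innerSL_apply_apply,
    smul_eq_mul, nsmul_eq_mul, D2E_eq_inner_fderiv_gradient]
  rw [← inner_gradient_left, real_inner_self_eq_norm_sq, real_inner_comm (gradient f x)]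
  ring

end Weight

section Divergence

lemma Fin.insertNth_one_eq_insertNth_zero_add_single {n : ℕ} (i : Fin (n + 1))
    (x : Fin n → ℝ) :
    i.insertNth (α := fun _ => ℝ) 1 x = i.insertNth (α := fun _ => ℝ) 0 x + Pi.single i 1 := by
  funext j
  refine Fin.succAboveCases i ?_ (fun k => ?_) j <;> simp

lemma integral_Icc_sum_fderiv_eq_zero_of_periodic {m : ℕ} {V : (Fin m → ℝ) → Fin m → ℝ}
    (hV : ContDiff ℝ 1 V) (hper : ∀ y i, V (y + Pi.single i 1) = V y) :
    ∫ y in Set.Icc 0 1, ∑ i, fderiv ℝ V y (Pi.single i 1) i = 0 := by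
  cases m with
  | zero => simp
  | succ n =>
    have hdiv_cont : Continuous fun y => ∑ i, fderiv ℝ V y (Pi.single i 1) i :=
      continuous_finsetSum _ fun i _ => (continuous_apply i).comp
        ((hV.continuous_fderiv one_ne_zero).clm_apply continuous_const)
    rw [integral_divergence_of_hasFDerivAt_off_countable 0 1 zero_le_one V (fderiv ℝ V) ∅
      Set.countable_empty hV.continuous.continuousOn
      (fun y _ => (hV.differentiable one_ne_zero y).hasFDerivAt) hdiv_cont.integrableOn_Icc]
    refine Finset.sum_eq_zero fun i _ => sub_eq_zero.2 ?_
    simp only [Pi.one_apply, Pi.zero_apply, Fin.insertNth_one_eq_insertNth_zero_add_single, hper]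

variable {m : ℕ}

lemma cube_eq_preimage_ofLp : cube m = WithLp.ofLp ⁻¹' Set.Icc 0 1 := by
  ext x
  simp [cube, Pi.le_def, forall_and]

lemma latt_single (i : Fin m) : latt m (Pi.single i 1) = eE m i := by
  ext j
  simp [latt, eE, Pi.single_apply]

lemma isCompact_cube : IsCompact (cube m) := by
  rw [cube_eq_preimage_ofLp]
  exact (EuclideanSpace.equiv (Fin m) ℝ).toHomeomorph.isCompact_preimage.2 isCompact_Icc

lemma setIntegral_cube (g : E m → ℝ) :
    ∫ x in cube m, g x = ∫ y in Set.Icc 0 1, g (WithLp.toLp 2 y) := by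
  rw [cube_eq_preimage_ofLp]
  exact (PiLp.volume_preserving_ofLp (Fin m)).setIntegral_preimage_emb
    (MeasurableEquiv.toLp 2 (Fin m → ℝ)).symm.measurableEmbedding (g ∘ WithLp.toLp 2) _

lemma integral_cube_divE_eq_zero_of_periodic {W : E m → E m} (hW : ContDiff ℝ 1 W)
    (hper : ∀ x k, W (x + latt m k) = W x) : ∫ x in cube m, divE m W x = 0 := by
  set ψ := EuclideanSpace.equiv (Fin m) ℝ
  have hV : ContDiff ℝ 1 (ψ ∘ W ∘ ψ.symm) := ψ.contDiff.comp (hW.comp ψ.symm.contDiff)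
  have hVper : ∀ y i, (ψ ∘ W ∘ ψ.symm) (y + Pi.single i 1) = (ψ ∘ W ∘ ψ.symm) y := by
    intro y i
    have hshift : ψ.symm (y + Pi.single i 1) = ψ.symm y + latt m (Pi.single i 1) := by
      rw [latt_single, map_add]
      rfl
    simp only [Function.comp_apply, hshift, hper]
  rw [setIntegral_cube, ← integral_Icc_sum_fderiv_eq_zero_of_periodic hV hVper]
  congr with y
  rw [ψ.comp_fderiv, ψ.symm.comp_right_fderiv]
  rfl

end Divergence

/-- integration by parts identity
`∫ ∇²f(∇f,∇f) e^{−f} = ½ ∫ (|∇f|⁴ − |∇f|² Δf) e^{−f}` over the torus. -/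
theorem int_hessian_identity (m : ℕ) (f : E m → ℝ) (hf : ContDiff ℝ (⊤ : ℕ∞) f)
    (hper : ∀ (x : E m) (k : Fin m → ℤ), f (x + latt m k) = f x) :
    ∫ x in cube m, D2E m f x (gradient f x) (gradient f x) * Real.exp (-f x) =
      (1 / 2) * ∫ x in cube m,
        (‖gradient f x‖ ^ 4 - ‖gradient f x‖ ^ 2 * lapE m f x) * Real.exp (-f x) := by
  have hf2 : ContDiff ℝ 2 f := hf.of_le (WithTop.coe_le_coe.2 le_top)
  have hgrad : ContDiff ℝ 1 (gradient f) := contDiff_gradient hf2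
  set W : E m → E m := fun y => (Real.exp (-f y) * ‖gradient f y‖ ^ 2) • gradient f y
  have hW : ContDiff ℝ 1 W :=
    ((Real.contDiff_exp.comp (hf2.of_le one_le_two).neg).mul (hgrad.norm_sq ℝ)).smul hgrad
  have hW_per : ∀ x k, W (x + latt m k) = W x := fun x k => by
    simp only [W, hper, gradient_add_of_periodic (hper · k)]
  have hintegrand : ∀ x, (‖gradient f x‖ ^ 4 - ‖gradient f x‖ ^ 2 * lapE m f x) * Real.exp (-f x) =
      2 * (D2E m f x (gradient f x) (gradient f x) * Real.exp (-f x)) - divE m W x := fun x => by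
    rw [divE_exp_neg_mul_norm_sq_smul_gradient (hf2.differentiable two_ne_zero x)
      (hgrad.differentiable one_ne_zero x)]
    ring
  have hA_cont : Continuous fun x => D2E m f x (gradient f x) (gradient f x) * Real.exp (-f x) := by
    have := hgrad.continuous_fderiv one_ne_zero
    simp only [D2E_eq_inner_fderiv_gradient]
    fun_prop
  simp only [hintegrand]
  rw [integral_sub ((hA_cont.continuousOn.integrableOn_compact isCompact_cube).const_mul 2)
    ((continuous_divE hW).continuousOn.integrableOn_compact isCompact_cube), integral_const_mul,
    integral_cube_divE_eq_zero_of_periodic hW hW_per]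
  ring
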